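/- arXiv:2410.07708 — 2 statements merged into one kernel-verified Lean document; each statement's English description precedes it below -/
import Mathlib

section
/- G has a vertex cover of size at most k if and only if there exists a set Γ of at most k tree pattern transformations such that for every edge e = (u,v) of G, some transformation in Γ transforms t_{u,v} into t*_{u,v} (i.e., Γ explains every pair (t_{u,v}, t*_{u,v}) in one step). -/
/-!  Basic framework: Σ-labelled ordered trees, tree patterns, matches,
tree pattern transformations, and explanation in at most `s` steps. -/

/-- A `α`-labelled ordered tree: a finite, nonempty, prefix-closed set of positions
(words over ℕ, with contiguous sibling indices) together with a labelling function.
The labelling function is total; only its values on `nodes` are relevant. -/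
structure LTree (α : Type) where
  nodes : Set (List ℕ)
  finite : nodes.Finite
  root_mem : [] ∈ nodes
  prefix_closed : ∀ v j, v ++ [j] ∈ nodes → v ∈ nodes
  sibling_closed : ∀ v j j', j' ≤ j → v ++ [j] ∈ nodes → v ++ [j'] ∈ nodes
  label : List ℕ → α

namespace LTree

/-- The subtree of `t` rooted at position `v`. -/
def subtreeAt {α : Type} (t : LTree α) (v : List ℕ) : LTree α where
  nodes := insert [] {w | v ++ w ∈ t.nodes}
  finite := by
    apply Set.Finite.insert
    have h : {w | v ++ w ∈ t.nodes} = (fun w => v ++ w) ⁻¹' t.nodes := rfl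
    rw [h]
    exact Set.Finite.preimage
      (Set.injOn_of_injective (fun a b hab => List.append_cancel_left hab)) t.finite
  root_mem := Set.mem_insert _ _
  prefix_closed := by
    intro w j hw
    rcases Set.mem_insert_iff.mp hw with h | h
    · exact absurd h (by simp)
    · refine Set.mem_insert_iff.mpr (Or.inr ?_)
      exact t.prefix_closed (v ++ w) j (by rw [List.append_assoc]; exact h)
  sibling_closed := by
    intro w j j' hle hw
    rcases Set.mem_insert_iff.mp hw with h | h
    · exact absurd h (by simp)
    · refine Set.mem_insert_iff.mpr (Or.inr ?_)
      have := t.sibling_closed (v ++ w) j j' hle (by rw [List.append_assoc]; exact h)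
      simpa [List.append_assoc] using this
  label := fun w => t.label (v ++ w)

/-- Isomorphism of (position-based) trees: same positions, same labels on them. -/
def ExtEq {α : Type} (s t : LTree α) : Prop :=
  s.nodes = t.nodes ∧ ∀ v ∈ s.nodes, s.label v = t.label v

/-- The contexts of `t` at `p` and of `t'` at `p` are isomorphic:
`t` and `t'` agree (nodes and labels) outside the subtrees rooted at `p`. -/
def ContextEq {α : Type} (t t' : LTree α) (p : List ℕ) : Prop :=
  (∀ w, ¬ p <+: w → (w ∈ t.nodes ↔ w ∈ t'.nodes)) ∧
  (∀ w ∈ t.nodes, ¬ p <+: w → t.label w = t'.label w)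

end LTree

/-- A tree pattern over labels `α`, node variables `ν` and tree variables `τ`:
an `(α ⊕ ν ⊕ τ)`-labelled ordered tree in which tree-variable nodes are leaves. -/
structure TreePattern (α ν τ : Type) extends LTree (α ⊕ ν ⊕ τ) where
  treeVar_leaf : ∀ v ∈ nodes, (∃ X : τ, label v = Sum.inr (Sum.inr X)) →
    ∀ j, v ++ [j] ∉ nodes

/-- A match of the tree pattern `σ` in the tree `t`, given by `μ` on `σ.nodes`. -/
structure IsMatch {α ν τ : Type} (σ : TreePattern α ν τ) (t : LTree α)
    (μ : List ℕ → List ℕ) : Prop where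
  mem : ∀ v ∈ σ.nodes, μ v ∈ t.nodes
  inj : ∀ u ∈ σ.nodes, ∀ v ∈ σ.nodes, μ u = μ v → u = v
  const : ∀ v ∈ σ.nodes, ∀ a : α, σ.label v = Sum.inl a → t.label (μ v) = a
  nodeVar : ∀ u ∈ σ.nodes, ∀ v ∈ σ.nodes, ∀ x : ν,
    σ.label u = Sum.inr (Sum.inl x) → σ.label v = Sum.inr (Sum.inl x) →
    t.label (μ u) = t.label (μ v)
  treeVar : ∀ u ∈ σ.nodes, ∀ v ∈ σ.nodes, ∀ X : τ,
    σ.label u = Sum.inr (Sum.inr X) → σ.label v = Sum.inr (Sum.inr X) →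
    LTree.ExtEq (t.subtreeAt (μ u)) (t.subtreeAt (μ v))
  child_to : ∀ v ∈ σ.nodes, ∀ j, v ++ [j] ∈ σ.nodes → ∃ m, μ (v ++ [j]) = μ v ++ [m]
  child_exact : ∀ v ∈ σ.nodes, ∀ m, μ v ++ [m] ∈ t.nodes →
    ∃ j, v ++ [j] ∈ σ.nodes ∧ μ (v ++ [j]) = μ v ++ [m]
  child_order : ∀ v ∈ σ.nodes, ∀ j₁ j₂ m₁ m₂, v ++ [j₁] ∈ σ.nodes → v ++ [j₂] ∈ σ.nodes →
    μ (v ++ [j₁]) = μ v ++ [m₁] → μ (v ++ [j₂]) = μ v ++ [m₂] → j₁ < j₂ → m₁ < m₂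

/-- `σ` matches `t` at the root. -/
def MatchesAtRoot {α ν τ : Type} (σ : TreePattern α ν τ) (t : LTree α) : Prop :=
  ∃ μ, IsMatch σ t μ ∧ μ [] = []

/-- A tree pattern transformation: body and head patterns such that all variables of
the head occur in the body. -/
structure TPT (α ν τ : Type) where
  body : TreePattern α ν τ
  head : TreePattern α ν τ
  nodeVar_sub : ∀ x : ν, (∃ v ∈ head.nodes, head.label v = Sum.inr (Sum.inl x)) →
    ∃ v ∈ body.nodes, body.label v = Sum.inr (Sum.inl x)
  treeVar_sub : ∀ X : τ, (∃ v ∈ head.nodes, head.label v = Sum.inr (Sum.inr X)) →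
    ∃ v ∈ body.nodes, body.label v = Sum.inr (Sum.inr X)

/-- `ρ` transforms `t` into `t'` via the witnessing matches `μ` (of the body in `t`)
and `μ'` (of the head in `t'`). -/
structure TransformsVia {α ν τ : Type} (ρ : TPT α ν τ) (t t' : LTree α)
    (μ μ' : List ℕ → List ℕ) : Prop where
  body_match : IsMatch ρ.body t μ
  head_match : IsMatch ρ.head t' μ'
  same_pos : μ [] = μ' []
  context_eq : LTree.ContextEq t t' (μ [])
  nodeVar_consistent : ∀ u ∈ ρ.body.nodes, ∀ u' ∈ ρ.head.nodes, ∀ x : ν,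
    ρ.body.label u = Sum.inr (Sum.inl x) → ρ.head.label u' = Sum.inr (Sum.inl x) →
    t.label (μ u) = t'.label (μ' u')
  treeVar_consistent : ∀ u ∈ ρ.body.nodes, ∀ u' ∈ ρ.head.nodes, ∀ X : τ,
    ρ.body.label u = Sum.inr (Sum.inr X) → ρ.head.label u' = Sum.inr (Sum.inr X) →
    LTree.ExtEq (t.subtreeAt (μ u)) (t'.subtreeAt (μ' u'))

/-- `ρ` transforms `t` into `t'`  (written `t ⇝_ρ t'` in the paper). -/
def Transforms {α ν τ : Type} (ρ : TPT α ν τ) (t t' : LTree α) : Prop :=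
  ∃ μ μ', TransformsVia ρ t t' μ μ'

/-- One rewriting step with a set `Γ` of transformations. -/
def StepRel {α ν τ : Type} (Γ : Set (TPT α ν τ)) (t t' : LTree α) : Prop :=
  ∃ ρ ∈ Γ, Transforms ρ t t'

/-- `Γ` explains the pair `(t, t')` in at most `s` steps. -/
def ExplainsIn {α ν τ : Type} (Γ : Set (TPT α ν τ)) (s : ℕ) (t t' : LTree α) : Prop :=
  ∃ k ≤ s, ∃ f : ℕ → LTree α, f 0 = t ∧ f k = t' ∧ ∀ i < k, StepRel Γ (f i) (f (i + 1))

/-- The `i`-th leaf of the full binary tree of depth `ℓ` (binary digits of `i`,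
most significant bit first). -/
def binLeaf (ℓ i : ℕ) : List ℕ := (List.range ℓ).map fun k => i / 2 ^ (ℓ - 1 - k) % 2

/-- The positions of the full binary tree of depth `ℓ`. -/
def fullBinNodes (ℓ : ℕ) : Set (List ℕ) := {w | w.length ≤ ℓ ∧ ∀ x ∈ w, x < 2}

/-- The full binary tree of depth `ℓ`, with a given labelling. -/
def fullBinTree {α : Type} (ℓ : ℕ) (lab : List ℕ → α) : LTree α where
  nodes := fullBinNodes ℓ
  finite := by
    have hsub : fullBinNodes ℓ ⊆
        (fun l : List (Fin 2) => l.map Fin.val) '' {l | l.length ≤ ℓ} := by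
      rintro w ⟨hlen, hmem⟩
      refine ⟨w.pmap (fun x hx => (⟨x, hx⟩ : Fin 2)) hmem, by simpa using hlen, ?_⟩
      simp [List.map_pmap]
    exact Set.Finite.subset ((List.finite_length_le (Fin 2) ℓ).image _) hsub
  root_mem := by simp [fullBinNodes]
  prefix_closed := by
    rintro v j ⟨hlen, hmem⟩
    refine ⟨?_, fun x hx => hmem x (by simp [hx])⟩
    simp only [List.length_append, List.length_cons, List.length_nil] at hlen
    omega
  sibling_closed := by
    rintro v j j' hle ⟨hlen, hmem⟩
    refine ⟨by simpa using hlen, ?_⟩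
    intro x hx
    rcases List.mem_append.mp hx with h | h
    · exact hmem x (by simp [h])
    · have hj : j < 2 := hmem j (by simp)
      simp only [List.mem_singleton] at h
      omega
  label := lab

/-- The tree with a single (root) node, labelled `a`. -/
def singleTree {α : Type} (a : α) : LTree α where
  nodes := {[]}
  finite := Set.finite_singleton _
  root_mem := rfl
  prefix_closed := by rintro v j h; simp at h
  sibling_closed := by rintro v j j' _ h; simp at h
  label := fun _ => a

/-- The source tree `t_{u,v}` associated with the edge `(u,v)`: the full binary tree of
depth `ℓ`, whose leaves corresponding to `u` and `v` (the `u`-th and `v`-th leaves in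
left-to-right order) are labelled with the edge label `ℓ_{u,v}`, and all other nodes
are labelled `b` (encoded as `none`). -/
def tEdge (n ℓ : ℕ) (u v : Fin n) : LTree (Option (Sym2 (Fin n))) :=
  fullBinTree ℓ fun w =>
    if w = binLeaf ℓ u.val ∨ w = binLeaf ℓ v.val then some s(u, v) else none

/-- The target tree `t*_{u,v}`: a single node labelled `ℓ_{u,v}`. -/
def tEdgeStar (n : ℕ) (u v : Fin n) : LTree (Option (Sym2 (Fin n))) :=
  singleTree (some s(u, v))

/-! ### Auxiliary lemmas -/

section Aux

open Classical

lemma binLeaf_length (ℓ i : ℕ) : (binLeaf ℓ i).length = ℓ := by simp [binLeaf]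

lemma binLeaf_mem (ℓ i : ℕ) : binLeaf ℓ i ∈ fullBinNodes ℓ := by
  refine ⟨by simp [binLeaf], ?_⟩
  intro x hx
  simp only [binLeaf, List.mem_map, List.mem_range] at hx
  obtain ⟨k, _, rfl⟩ := hx
  omega

lemma binLeaf_inj {ℓ i j : ℕ} (hi : i < 2 ^ ℓ) (hj : j < 2 ^ ℓ)
    (h : binLeaf ℓ i = binLeaf ℓ j) : i = j := by
  have hbit : ∀ m, i / 2 ^ m % 2 = j / 2 ^ m % 2 := by
    intro m
    by_cases hm : m < ℓ
    · have hk : ℓ - 1 - m < ℓ := by omega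
      have h2 : ℓ - 1 - (ℓ - 1 - m) = m := by omega
      have := congrArg (fun l => l.getD (ℓ - 1 - m) 0) h
      simpa [binLeaf, List.getD, List.getElem?_map, List.getElem?_range, hk, h2] using this
    · have h2 : 2 ^ ℓ ≤ 2 ^ m := Nat.pow_le_pow_right (by norm_num) (by omega)
      rw [Nat.div_eq_of_lt (by omega), Nat.div_eq_of_lt (by omega)]
  apply Nat.eq_of_testBit_eq
  intro m
  simp only [Nat.testBit_eq_decide_div_mod_eq, hbit m]

lemma fullBinNodes_snoc {ℓ : ℕ} {q : List ℕ} {m : ℕ} (h : q ++ [m] ∈ fullBinNodes ℓ) :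
    m < 2 := h.2 m (by simp)

/-- Rigidity: any match of a pattern in a full binary tree whose root maps to the root
is the identity on the pattern's nodes. -/
lemma match_id {α ν τ : Type} {σ : TreePattern α ν τ} {ℓ : ℕ} {lab : List ℕ → α}
    {μ : List ℕ → List ℕ} (hm : IsMatch σ (fullBinTree ℓ lab) μ) (h0 : μ [] = []) :
    ∀ p ∈ σ.nodes, μ p = p := by
  intro p
  induction p using List.reverseRecOn with
  | nil => intro _; exact h0
  | append_singleton q j ih =>
    intro hqj
    have hq : q ∈ σ.nodes := σ.prefix_closed q j hqj
    have hμq : μ q = q := ih hq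
    -- child 0 of q in σ
    have h0s : q ++ [0] ∈ σ.nodes := σ.sibling_closed q j 0 (Nat.zero_le j) hqj
    obtain ⟨m0, hm0⟩ := hm.child_to q hq 0 h0s
    rw [hμq] at hm0
    have hm0mem : q ++ [m0] ∈ fullBinNodes ℓ := hm0 ▸ hm.mem _ h0s
    have hm0lt : m0 < 2 := fullBinNodes_snoc hm0mem
    have hm00 : m0 = 0 := by
      by_contra hne
      have hm01 : m0 = 1 := by omega
      have h0t : q ++ [0] ∈ fullBinNodes ℓ :=
        (fullBinTree ℓ lab).sibling_closed q m0 0 (Nat.zero_le _) hm0mem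
      obtain ⟨j', hj's, hj'eq⟩ := hm.child_exact q hq 0 (by rw [hμq]; exact h0t)
      have hj'ne : j' ≠ 0 := by
        rintro rfl
        rw [hμq] at hj'eq
        have := hm0.symm.trans hj'eq
        simp at this
        omega
      have := hm.child_order q hq 0 j' m0 0 h0s hj's (by rw [hμq]; exact hm0) hj'eq
        (Nat.pos_of_ne_zero hj'ne)
      omega
    rcases Nat.lt_or_ge j 1 with hj0 | hj1
    · have : j = 0 := by omega
      subst this
      rw [hm0, hm00]
    · -- child 1 of q in σ
      have h1s : q ++ [1] ∈ σ.nodes := σ.sibling_closed q j 1 hj1 hqj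
      obtain ⟨m1, hm1⟩ := hm.child_to q hq 1 h1s
      have hm1mem : q ++ [m1] ∈ fullBinNodes ℓ := by
        have := hm.mem _ h1s; rw [hm1, hμq] at this; exact this
      have hm1lt : m1 < 2 := fullBinNodes_snoc hm1mem
      have h01 : m0 < m1 := hm.child_order q hq 0 1 m0 m1 h0s h1s
        (by rw [hμq]; exact hm0) hm1 Nat.zero_lt_one
      have hm11 : m1 = 1 := by omega
      rcases Nat.lt_or_ge j 2 with hj2 | hj2
      · have : j = 1 := by omega
        subst this
        rw [hm1, hμq, hm11]
      · exfalso
        obtain ⟨mj, hmj⟩ := hm.child_to q hq j hqj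
        have hmjmem : q ++ [mj] ∈ fullBinNodes ℓ := by
          have := hm.mem _ hqj; rw [hmj, hμq] at this; exact this
        have hmjlt : mj < 2 := fullBinNodes_snoc hmjmem
        have h1j : m1 < mj := hm.child_order q hq 1 j m1 mj h1s hqj hm1 hmj (by omega)
        omega

lemma tEdge_nodes (n ℓ : ℕ) (u v : Fin n) : (tEdge n ℓ u v).nodes = fullBinNodes ℓ := rfl

lemma tEdge_label_eq {n ℓ : ℕ} {u v : Fin n} {p : List ℕ} {c : Sym2 (Fin n)}
    (h : (tEdge n ℓ u v).label p = some c) :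
    p = binLeaf ℓ u.val ∨ p = binLeaf ℓ v.val := by
  by_contra hc
  push_neg at hc
  simp only [tEdge, fullBinTree] at h
  rw [if_neg (by tauto)] at h
  exact nomatch h

lemma tEdge_label_of {n ℓ : ℕ} {u v : Fin n} {p : List ℕ}
    (h : p = binLeaf ℓ u.val ∨ p = binLeaf ℓ v.val) :
    (tEdge n ℓ u v).label p = some s(u, v) := by
  simp only [tEdge, fullBinTree]
  rw [if_pos h]

/-! ### The transformations used in the forward direction -/

/-- The body pattern: a full binary tree of depth `ℓ`, every node labelled by
its own node variable (the variable being the position itself). -/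
def idBody (α : Type) (ℓ : ℕ) : TreePattern α (List ℕ) (List ℕ) where
  toLTree := fullBinTree ℓ (fun w => Sum.inr (Sum.inl w))
  treeVar_leaf := by
    rintro v _ ⟨X, hX⟩
    simp [fullBinTree] at hX

/-- The head pattern: a single node labelled with the node variable `p`. -/
def varHead (α : Type) (p : List ℕ) : TreePattern α (List ℕ) (List ℕ) where
  toLTree := singleTree (Sum.inr (Sum.inl p))
  treeVar_leaf := by
    rintro v _ ⟨X, hX⟩
    simp [singleTree] at hX

/-- The transformation associated with a vertex (given by its leaf position `p`). -/
def vertTPT (α : Type) (ℓ : ℕ) (p : List ℕ) (hp : p ∈ fullBinNodes ℓ) :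
    TPT α (List ℕ) (List ℕ) where
  body := idBody α ℓ
  head := varHead α p
  nodeVar_sub := by
    rintro x ⟨v, hv, hlab⟩
    simp only [varHead, singleTree, Sum.inr.injEq, Sum.inl.injEq] at hlab
    exact ⟨p, hp, by simp [idBody, fullBinTree, hlab]⟩
  treeVar_sub := by
    rintro X ⟨v, hv, hlab⟩
    simp [varHead, singleTree] at hlab

lemma idBody_match {α : Type} (ℓ : ℕ) (lab : List ℕ → α) :
    IsMatch (idBody α ℓ) (fullBinTree ℓ lab) id where
  mem := fun v hv => hv
  inj := fun _ _ _ _ h => h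
  const := by rintro v _ a h; simp [idBody, fullBinTree] at h
  nodeVar := by
    rintro u _ v _ x hu hv
    simp only [idBody, fullBinTree, Sum.inr.injEq, Sum.inl.injEq] at hu hv
    rw [hu, hv]
  treeVar := by rintro u _ v _ X hu _; simp [idBody, fullBinTree] at hu
  child_to := fun v _ j _ => ⟨j, rfl⟩
  child_exact := fun v _ m hm => ⟨m, hm, rfl⟩
  child_order := by
    intro v _ j₁ j₂ m₁ m₂ _ _ h₁ h₂ hlt
    simp only [id_eq, List.append_cancel_left_eq, List.cons.injEq] at h₁ h₂
    omega

lemma varHead_match {α : Type} (p : List ℕ) (a : α) :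
    IsMatch (varHead α p) (singleTree a) id where
  mem := fun v hv => hv
  inj := fun _ _ _ _ h => h
  const := by rintro v _ c h; simp [varHead, singleTree] at h
  nodeVar := by intro u hu v hv x _ _; rfl
  treeVar := by
    intro u hu v hv X hX _
    simp [varHead, singleTree] at hX
  child_to := by
    intro v hv j h
    simp only [varHead, singleTree, Set.mem_singleton_iff] at h
    exact absurd h (by simp)
  child_exact := by
    intro v hv m h
    simp only [singleTree, Set.mem_singleton_iff] at h
    exact absurd h (by simp)
  child_order := by
    intro v hv j₁ j₂ m₁ m₂ h₁ h₂ _ _ _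
    simp only [varHead, singleTree, Set.mem_singleton_iff] at h₁
    exact absurd h₁ (by simp)

lemma vertTPT_transforms {n ℓ : ℕ} {u v w : Fin n} (h : w = u ∨ w = v) :
    Transforms (vertTPT (Option (Sym2 (Fin n))) ℓ (binLeaf ℓ w.val) (binLeaf_mem ℓ _))
      (tEdge n ℓ u v) (tEdgeStar n u v) := by
  refine ⟨id, id, ?_⟩
  constructor
  · exact idBody_match ℓ _
  · exact varHead_match _ _
  · rfl
  · exact ⟨fun w hw => absurd (List.nil_prefix (l := w)) hw,
      fun w _ hw => absurd (List.nil_prefix (l := w)) hw⟩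
  · intro a ha a' ha' x hax hax'
    simp only [vertTPT, varHead, singleTree, Sum.inr.injEq, Sum.inl.injEq] at hax'
    simp only [vertTPT, idBody, fullBinTree, Sum.inr.injEq, Sum.inl.injEq] at hax
    subst hax'
    subst hax
    show (tEdge n ℓ u v).label (binLeaf ℓ w.val) = (tEdgeStar n u v).label _
    rw [tEdge_label_of (by rcases h with rfl | rfl
                           · exact Or.inl rfl
                           · exact Or.inr rfl)]
    rfl
  · intro a ha a' ha' X haX _
    simp [vertTPT, idBody, fullBinTree] at haX

/-! ### Extracting a vertex from a transformation (backward direction) -/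

lemma transform_roots {n ℓ : ℕ} {u v : Fin n}
    {ρ : TPT (Option (Sym2 (Fin n))) (List ℕ) (List ℕ)} {μ μ' : List ℕ → List ℕ}
    (T : TransformsVia ρ (tEdge n ℓ u v) (tEdgeStar n u v) μ μ') :
    μ' [] = [] ∧ ∀ p ∈ ρ.body.nodes, μ p = p := by
  have hroot' : μ' [] = [] := by
    have := T.head_match.mem [] ρ.head.root_mem
    simpa [tEdgeStar, singleTree] using this
  have hroot : μ [] = [] := T.same_pos.trans hroot'
  exact ⟨hroot', match_id T.body_match hroot⟩

lemma tEdgeStar_label (n : ℕ) (u v : Fin n) (p : List ℕ) :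
    (tEdgeStar n u v).label p = some s(u, v) := rfl

/-- A transformation that transforms at least one edge-pair has a "vertex":
a vertex contained in every edge it transforms. -/
lemma exists_vertex {n ℓ : ℕ} (hℓ₁ : n ≤ 2 ^ ℓ)
    {ρ : TPT (Option (Sym2 (Fin n))) (List ℕ) (List ℕ)} {a b : Fin n}
    (hT : Transforms ρ (tEdge n ℓ a b) (tEdgeStar n a b)) :
    ∃ w : Fin n, ∀ a' b' : Fin n,
      Transforms ρ (tEdge n ℓ a' b') (tEdgeStar n a' b') → w = a' ∨ w = b' := by
  obtain ⟨μ, μ', T⟩ := hT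
  rcases hlab : ρ.head.label [] with c | x | X
  · -- constant root label
    have hc : c = some s(a, b) := by
      have := T.head_match.const [] ρ.head.root_mem c hlab
      rw [← this, tEdgeStar_label]
    refine ⟨a, ?_⟩
    rintro a' b' ⟨ν, ν', T'⟩
    have hc' : c = some s(a', b') := by
      have := T'.head_match.const [] ρ.head.root_mem c hlab
      rw [← this, tEdgeStar_label]
    have : s(a, b) = s(a', b') := by
      rw [hc] at hc'; exact Option.some.inj hc'
    rw [Sym2.eq_iff] at this
    tauto
  · -- node variable at the root of the head
    obtain ⟨p, hp, hpl⟩ := ρ.nodeVar_sub x ⟨[], ρ.head.root_mem, hlab⟩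
    have key : ∀ (a' b' : Fin n) (ν ν' : List ℕ → List ℕ),
        TransformsVia ρ (tEdge n ℓ a' b') (tEdgeStar n a' b') ν ν' →
        (tEdge n ℓ a' b').label p = some s(a', b') := by
      intro a' b' ν ν' T'
      obtain ⟨hr', hid⟩ := transform_roots T'
      have := T'.nodeVar_consistent p hp [] ρ.head.root_mem x hpl hlab
      rw [hid p hp, tEdgeStar_label] at this
      exact this
    have hpab := tEdge_label_eq (key a b μ μ' T)
    have pick : ∃ w : Fin n, p = binLeaf ℓ w.val := by
      rcases hpab with h | h
      · exact ⟨a, h⟩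
      · exact ⟨b, h⟩
    obtain ⟨w, hw⟩ := pick
    refine ⟨w, ?_⟩
    rintro a' b' ⟨ν, ν', T'⟩
    have := tEdge_label_eq (key a' b' ν ν' T')
    rcases this with h | h
    · left
      exact Fin.ext (binLeaf_inj (lt_of_lt_of_le w.isLt hℓ₁)
        (lt_of_lt_of_le a'.isLt hℓ₁) (hw ▸ h))
    · right
      exact Fin.ext (binLeaf_inj (lt_of_lt_of_le w.isLt hℓ₁)
        (lt_of_lt_of_le b'.isLt hℓ₁) (hw ▸ h))
  · -- tree variable at the root of the head
    obtain ⟨p, hp, hpl⟩ := ρ.treeVar_sub X ⟨[], ρ.head.root_mem, hlab⟩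
    have key : ∀ (a' b' : Fin n) (ν ν' : List ℕ → List ℕ),
        TransformsVia ρ (tEdge n ℓ a' b') (tEdgeStar n a' b') ν ν' →
        (tEdge n ℓ a' b').label p = some s(a', b') := by
      intro a' b' ν ν' T'
      obtain ⟨hr', hid⟩ := transform_roots T'
      have hE := T'.treeVar_consistent p hp [] ρ.head.root_mem X hpl hlab
      have := hE.2 [] (Set.mem_insert _ _)
      simp only [LTree.subtreeAt, List.append_nil] at this
      rw [hid p hp] at this
      rw [this, tEdgeStar_label]
    have hpab := tEdge_label_eq (key a b μ μ' T)
    have pick : ∃ w : Fin n, p = binLeaf ℓ w.val := by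
      rcases hpab with h | h
      · exact ⟨a, h⟩
      · exact ⟨b, h⟩
    obtain ⟨w, hw⟩ := pick
    refine ⟨w, ?_⟩
    rintro a' b' ⟨ν, ν', T'⟩
    have := tEdge_label_eq (key a' b' ν ν' T')
    rcases this with h | h
    · left
      exact Fin.ext (binLeaf_inj (lt_of_lt_of_le w.isLt hℓ₁)
        (lt_of_lt_of_le a'.isLt hℓ₁) (hw ▸ h))
    · right
      exact Fin.ext (binLeaf_inj (lt_of_lt_of_le w.isLt hℓ₁)
        (lt_of_lt_of_le b'.isLt hℓ₁) (hw ▸ h))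

end Aux

/-- `G` has a vertex cover of size at most `k` iff there is a set `Γ` of
at most `k` tree pattern transformations such that for every edge `(u,v)` of `G`, some
transformation in `Γ` transforms `t_{u,v}` into `t*_{u,v}` (i.e. `Γ` explains every pair
`(t_{u,v}, t*_{u,v})` in one step). -/
theorem stmt_2 (n k ℓ : ℕ) (G : SimpleGraph (Fin n))
    (hℓ₁ : n ≤ 2 ^ ℓ) (hℓ₂ : ∀ m : ℕ, n ≤ 2 ^ m → ℓ ≤ m) :
    (∃ S : Finset (Fin n), S.card ≤ k ∧ ∀ u v : Fin n, G.Adj u v → u ∈ S ∨ v ∈ S) ↔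
    (∃ Γ : Finset (TPT (Option (Sym2 (Fin n))) (List ℕ) (List ℕ)),
      Γ.card ≤ k ∧ ∀ u v : Fin n, G.Adj u v →
        ∃ ρ ∈ Γ, Transforms ρ (tEdge n ℓ u v) (tEdgeStar n u v)) := by
  classical
  constructor
  · rintro ⟨S, hcard, hcov⟩
    refine ⟨S.image (fun w => vertTPT (Option (Sym2 (Fin n))) ℓ (binLeaf ℓ w.val)
      (binLeaf_mem ℓ _)), le_trans (Finset.card_image_le) hcard, ?_⟩
    intro u v huv
    rcases hcov u v huv with h | h
    · exact ⟨_, Finset.mem_image_of_mem _ h, vertTPT_transforms (Or.inl rfl)⟩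
    · exact ⟨_, Finset.mem_image_of_mem _ h, vertTPT_transforms (Or.inr rfl)⟩
  · rintro ⟨Γ, hcard, hΓ⟩
    by_cases hE : ∃ u v : Fin n, G.Adj u v
    · obtain ⟨u₀, v₀, h₀⟩ := hE
      have hinh : Inhabited (Fin n) := ⟨u₀⟩
      set vert : TPT (Option (Sym2 (Fin n))) (List ℕ) (List ℕ) → Fin n :=
        fun ρ => if h : ∃ w : Fin n, ∀ a' b' : Fin n,
            Transforms ρ (tEdge n ℓ a' b') (tEdgeStar n a' b') → w = a' ∨ w = b'
          then h.choose else default with hvert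
      refine ⟨Γ.image vert, le_trans (Finset.card_image_le) hcard, ?_⟩
      intro u v huv
      obtain ⟨ρ, hρΓ, hρ⟩ := hΓ u v huv
      have hw : ∃ w : Fin n, ∀ a' b' : Fin n,
          Transforms ρ (tEdge n ℓ a' b') (tEdgeStar n a' b') → w = a' ∨ w = b' :=
        exists_vertex hℓ₁ hρ
      have hverteq : vert ρ = hw.choose := by rw [hvert]; exact dif_pos hw
      have hmem : vert ρ ∈ Γ.image vert := Finset.mem_image_of_mem _ hρΓ
      rcases hw.choose_spec u v hρ with h | h
      · left; rw [← h, ← hverteq]; exact hmem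
      · right; rw [← h, ← hverteq]; exact hmem
    · push_neg at hE
      exact ⟨∅, by simp, fun u v huv => absurd huv (hE u v)⟩
end

section
/- Let t_1, …, t_n and t_1*, …, t_n* be Σ-labelled ordered trees, let P be the maximal set of positions such that some tree pattern with node set P matches every t_i at the root (and every tree pattern matching every t_i at the root has node set contained in P), and let σ be the tree pattern with node set P that labels each position p with a node variable x_p if p is an inner node in some t_i or a leaf in all t_i, and with a tree variable Y_p otherwise, all variables pairwise distinct. If there exists a tree pattern transformation that, applied at the root (i.e., with witnessing matches mapping the roots of body and head to the roots of t_i and t_i*), transforms every t_i into t_i*, then there exists a tree pattern transformation with body σ that, applied at the root, transforms every t_i into t_i*. -/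
/-- `ρ` transforms `t` into `t'` when applied at the root: the witnessing matches send
the roots of body and head to the roots of `t` and `t'`. -/
def TransformsAtRoot {α ν τ : Type} (ρ : TPT α ν τ) (t t' : LTree α) : Prop :=
  ∃ μ μ', TransformsVia ρ t t' μ μ' ∧ μ [] = [] ∧ μ' [] = []


/-! ### Auxiliary lemmas for Statement 16 -/

lemma match_root_id {α ν τ : Type} {σ : TreePattern α ν τ} {t : LTree α}
    {μ : List ℕ → List ℕ} (h : IsMatch σ t μ) (h0 : μ [] = []) :
    ∀ v ∈ σ.nodes, μ v = v := by
  intro v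
  induction v using List.reverseRecOn with
  | nil => intro _; exact h0
  | append_singleton v j ih =>
    intro hmem
    have hv : v ∈ σ.nodes := σ.prefix_closed v j hmem
    have hμv : μ v = v := ih hv
    have main : ∀ j, v ++ [j] ∈ σ.nodes → μ (v ++ [j]) = v ++ [j] := by
      intro j
      induction j using Nat.strong_induction_on with
      | _ j IH =>
        intro hj
        obtain ⟨m, hm⟩ := h.child_to v hv j hj
        rw [hμv] at hm
        have hmj : j ≤ m := by
          rcases Nat.eq_zero_or_pos j with h0' | hpos
          · omega
          · have hj' : v ++ [j - 1] ∈ σ.nodes := σ.sibling_closed v j (j - 1) (by omega) hj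
            have hidj' := IH (j - 1) (by omega) hj'
            have hco := h.child_order v hv (j - 1) j (j - 1) m hj' hj
              (by rw [hμv]; exact hidj') (by rw [hμv]; exact hm) (by omega)
            omega
        have hmj2 : ¬ j < m := by
          intro hlt
          have hmt : v ++ [m] ∈ t.nodes := by rw [← hm]; exact h.mem _ hj
          have hjt : v ++ [j] ∈ t.nodes := t.sibling_closed v m j (le_of_lt hlt) hmt
          obtain ⟨j₀, hj₀, hj₀m⟩ := h.child_exact v hv j (by rw [hμv]; exact hjt)
          rw [hμv] at hj₀m
          rcases lt_trichotomy j₀ j with hlt' | heq | hgt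
          · have hid := IH j₀ hlt' hj₀
            rw [hid] at hj₀m
            have : j₀ = j := by simpa using hj₀m
            omega
          · rw [heq] at hj₀m
            rw [hj₀m] at hm
            have : j = m := by simpa using hm
            omega
          · have hco := h.child_order v hv j j₀ m j hj hj₀
              (by rw [hμv]; exact hm) (by rw [hμv]; exact hj₀m) hgt
            omega
        have hmeq : m = j := by omega
        rw [hm, hmeq]
    exact main j hmem

lemma match_root_nodes {α ν τ : Type} {σ : TreePattern α ν τ} {t : LTree α}
    {μ : List ℕ → List ℕ} (h : IsMatch σ t μ) (h0 : μ [] = []) :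
    σ.nodes = t.nodes := by
  apply Set.Subset.antisymm
  · intro v hv
    have := h.mem v hv
    rwa [match_root_id h h0 v hv] at this
  · intro w
    induction w using List.reverseRecOn with
    | nil => intro _; exact σ.root_mem
    | append_singleton w m ih =>
      intro hw
      have hwt : w ∈ t.nodes := t.prefix_closed w m hw
      have hwσ : w ∈ σ.nodes := ih hwt
      have hμw : μ w = w := match_root_id h h0 w hwσ
      obtain ⟨j, hj, hjm⟩ := h.child_exact w hwσ m (by rw [hμw]; exact hw)
      rw [hμw, match_root_id h h0 _ hj] at hjm
      have : j = m := by simpa using hjm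
      rwa [← this]

open Classical in
/-- The label of the head of the modified transformation: constants are kept,
node and tree variables are replaced by the position of a node of the body
carrying the same variable. -/
noncomputable def headLabel {α : Type} (ρ₀ : TPT α (List ℕ) (List ℕ)) :
    List ℕ → α ⊕ (List ℕ ⊕ List ℕ) := fun q =>
  match ρ₀.head.label q with
  | Sum.inl a => Sum.inl a
  | Sum.inr (Sum.inl x) => Sum.inr (Sum.inl
      (if h : ∃ v ∈ ρ₀.body.nodes, ρ₀.body.label v = Sum.inr (Sum.inl x)
        then h.choose else []))
  | Sum.inr (Sum.inr X) => Sum.inr (Sum.inl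
      (if h : ∃ v ∈ ρ₀.body.nodes, ρ₀.body.label v = Sum.inr (Sum.inr X)
        then h.choose else []))

lemma headLabel_ne_treeVar {α : Type} (ρ₀ : TPT α (List ℕ) (List ℕ)) (q : List ℕ)
    (X : List ℕ) : headLabel ρ₀ q ≠ Sum.inr (Sum.inr X) := by
  unfold headLabel
  rcases ρ₀.head.label q with a | x | Y <;> simp

lemma headLabel_const {α : Type} (ρ₀ : TPT α (List ℕ) (List ℕ)) (q : List ℕ)
    (a : α) (h : headLabel ρ₀ q = Sum.inl a) : ρ₀.head.label q = Sum.inl a := by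
  unfold headLabel at h
  rcases hq : ρ₀.head.label q with b | x | Y <;> rw [hq] at h <;> simp_all

lemma headLabel_nodeVar {α : Type} (ρ₀ : TPT α (List ℕ) (List ℕ)) {q : List ℕ}
    (hq : q ∈ ρ₀.head.nodes) {p : List ℕ}
    (h : headLabel ρ₀ q = Sum.inr (Sum.inl p)) :
    p ∈ ρ₀.body.nodes ∧
      ((∃ x, ρ₀.body.label p = Sum.inr (Sum.inl x) ∧
             ρ₀.head.label q = Sum.inr (Sum.inl x)) ∨
       (∃ X, ρ₀.body.label p = Sum.inr (Sum.inr X) ∧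
             ρ₀.head.label q = Sum.inr (Sum.inr X))) := by
  unfold headLabel at h
  rcases hql : ρ₀.head.label q with b | x | Y <;> rw [hql] at h <;> dsimp only at h
  · simp at h
  · have hex : ∃ v ∈ ρ₀.body.nodes, ρ₀.body.label v = Sum.inr (Sum.inl x) :=
      ρ₀.nodeVar_sub x ⟨q, hq, hql⟩
    rw [dif_pos hex] at h
    have hp : p = hex.choose := by simpa using h.symm
    obtain ⟨hmem, hlab⟩ := hex.choose_spec
    exact ⟨hp ▸ hmem, Or.inl ⟨x, hp ▸ hlab, rfl⟩⟩
  · have hex : ∃ v ∈ ρ₀.body.nodes, ρ₀.body.label v = Sum.inr (Sum.inr Y) :=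
      ρ₀.treeVar_sub Y ⟨q, hq, hql⟩
    rw [dif_pos hex] at h
    have hp : p = hex.choose := by simpa using h.symm
    obtain ⟨hmem, hlab⟩ := hex.choose_spec
    exact ⟨hp ▸ hmem, Or.inr ⟨Y, hp ▸ hlab, rfl⟩⟩

lemma headLabel_spec {α : Type} (ρ₀ : TPT α (List ℕ) (List ℕ)) {t t' : LTree α}
    {μ μ' : List ℕ → List ℕ} (h : TransformsVia ρ₀ t t' μ μ')
    (hμ0 : μ [] = []) (hμ'0 : μ' [] = [])
    {q : List ℕ} (hq : q ∈ ρ₀.head.nodes) {p : List ℕ}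
    (hl : headLabel ρ₀ q = Sum.inr (Sum.inl p)) :
    t.label p = t'.label q := by
  obtain ⟨hmem, hcase⟩ := headLabel_nodeVar ρ₀ hq hl
  have hμp : μ p = p := match_root_id h.body_match hμ0 p hmem
  have hμ'q : μ' q = q := match_root_id h.head_match hμ'0 q hq
  rcases hcase with ⟨x, hbp, hhq⟩ | ⟨X, hbp, hhq⟩
  · have := h.nodeVar_consistent p hmem q hq x hbp hhq
    rwa [hμp, hμ'q] at this
  · have hext := h.treeVar_consistent p hmem q hq X hbp hhq
    have := hext.2 [] (Set.mem_insert _ _)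
    rw [hμp, hμ'q] at this
    simpa [LTree.subtreeAt] using this

/-- **Statement 16.** Let `(t_i, t_i*)` be pairs of trees, `P` the maximal set of
positions such that some tree pattern with node set `P` matches every `t_i` at the root,
and `σ` the tree pattern with node set `P` labelling each position `p` with a node
variable `x_p` if `p` is an inner node in some `t_i` or a leaf in all `t_i`, and with a
tree variable `Y_p` otherwise (all variables pairwise distinct; here the variable
attached to `p` is `p` itself).  If some tree pattern transformation applied at the root
transforms every `t_i` into `t_i*`, then some tree pattern transformation with body `σ`
applied at the root transforms every `t_i` into `t_i*`. -/
theorem stmt_16 {α : Type} (n : ℕ) (t tStar : Fin n → LTree α)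
    (P : Set (List ℕ))
    (hP₁ : ∃ σ : TreePattern α (List ℕ) (List ℕ), σ.nodes = P ∧ ∀ i, MatchesAtRoot σ (t i))
    (hP₂ : ∀ (ν' τ' : Type) (σ' : TreePattern α ν' τ'),
      (∀ i, MatchesAtRoot σ' (t i)) → σ'.nodes ⊆ P)
    (hexists : ∃ ρ : TPT α (List ℕ) (List ℕ), ∀ i, TransformsAtRoot ρ (t i) (tStar i)) :
    ∃ ρ : TPT α (List ℕ) (List ℕ),
      ρ.body.nodes = P ∧
      (∀ p ∈ P,
        (((∃ i, ∃ j, p ++ [j] ∈ (t i).nodes) ∨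
          (∀ i, p ∈ (t i).nodes ∧ ∀ j, p ++ [j] ∉ (t i).nodes)) →
            ρ.body.label p = Sum.inr (Sum.inl p)) ∧
        (¬ ((∃ i, ∃ j, p ++ [j] ∈ (t i).nodes) ∨
          (∀ i, p ∈ (t i).nodes ∧ ∀ j, p ++ [j] ∉ (t i).nodes)) →
            ρ.body.label p = Sum.inr (Sum.inr p))) ∧
      ∀ i, TransformsAtRoot ρ (t i) (tStar i) := by
  classical
  obtain ⟨σ₀, hσ₀nodes, hσ₀match⟩ := hP₁
  obtain ⟨ρ₀, hρ₀⟩ := hexists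
  choose μ μ' htrans hμ0 hμ'0 using hρ₀
  -- P equals the node set of every `t i`
  have hPt : ∀ i, P = (t i).nodes := by
    intro i
    obtain ⟨ν, hm, hroot⟩ := hσ₀match i
    rw [← hσ₀nodes]
    exact match_root_nodes hm hroot
  -- the body of ρ₀ is contained in P
  have hbody₀sub : ρ₀.body.nodes ⊆ P :=
    hP₂ _ _ ρ₀.body (fun i => ⟨μ i, (htrans i).body_match, hμ0 i⟩)
  -- the head of ρ₀ has the same nodes as every `tStar i`
  have hQ : ∀ i, ρ₀.head.nodes = (tStar i).nodes := fun i =>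
    match_root_nodes (htrans i).head_match (hμ'0 i)
  -- the new body: all positions of P, labelled with node variables
  let body : TreePattern α (List ℕ) (List ℕ) :=
    { nodes := P
      finite := hσ₀nodes ▸ σ₀.finite
      root_mem := hσ₀nodes ▸ σ₀.root_mem
      prefix_closed := hσ₀nodes ▸ σ₀.prefix_closed
      sibling_closed := hσ₀nodes ▸ σ₀.sibling_closed
      label := fun v => Sum.inr (Sum.inl v)
      treeVar_leaf := by intro v _ hX; exact absurd hX (by simp) }
  -- the new head: nodes of ρ₀.head, relabelled by headLabel
  let head : TreePattern α (List ℕ) (List ℕ) :=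
    { toLTree := { ρ₀.head.toLTree with label := headLabel ρ₀ }
      treeVar_leaf := by
        intro v _ hX
        exact absurd hX (by simpa using fun X => headLabel_ne_treeVar ρ₀ v X) }
  have hheadnodes : head.nodes = ρ₀.head.nodes := rfl
  refine ⟨{ body := body, head := head
            nodeVar_sub := ?_, treeVar_sub := ?_ }, rfl, ?_, ?_⟩
  · rintro x ⟨q, hq, hlab⟩
    exact ⟨x, hbody₀sub (headLabel_nodeVar ρ₀ hq hlab).1, rfl⟩
  · rintro X ⟨q, _, hlab⟩
    exact absurd hlab (headLabel_ne_treeVar ρ₀ q X)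
  · -- labels of the body
    intro p hp
    refine ⟨fun _ => rfl, fun hn => absurd ?_ hn⟩
    rcases Nat.eq_zero_or_pos n with h0 | hpos
    · exact Or.inr fun i => absurd i.isLt (by omega)
    · by_cases hc : ∃ j, p ++ [j] ∈ P
      · obtain ⟨j, hj⟩ := hc
        exact Or.inl ⟨⟨0, hpos⟩, j, (hPt ⟨0, hpos⟩) ▸ hj⟩
      · refine Or.inr fun i => ⟨(hPt i) ▸ hp, fun j hj => hc ⟨j, (hPt i) ▸ hj⟩⟩
  · -- the transformation
    intro i
    refine ⟨id, id, ?_, rfl, rfl⟩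
    have hti : body.nodes = (t i).nodes := hPt i
    have hsi : head.nodes = (tStar i).nodes := hQ i
    constructor
    · -- body match
      constructor
      · intro v hv; exact hti ▸ hv
      · intro u _ v _ h; exact h
      · intro v _ a ha; exact absurd ha (by simp [body])
      · intro u hu v hv x hx hy
        have hux : u = x := by simpa [body] using hx
        have hvx : v = x := by simpa [body] using hy
        rw [hux, hvx]
      · intro u _ v _ X hX; exact absurd hX (by simp [body])
      · intro v _ j _; exact ⟨j, rfl⟩
      · intro v hv m hm
        exact ⟨m, hti ▸ hm, rfl⟩
      · intro v _ j₁ j₂ m₁ m₂ _ _ h₁ h₂ hlt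
        have e₁ : j₁ = m₁ := by simpa using h₁
        have e₂ : j₂ = m₂ := by simpa using h₂
        omega
    · -- head match
      constructor
      · intro v hv; exact hsi ▸ hv
      · intro u _ v _ h; exact h
      · intro v hv a ha
        have := (htrans i).head_match.const v hv a (headLabel_const ρ₀ v a ha)
        rwa [match_root_id (htrans i).head_match (hμ'0 i) v hv] at this
      · intro u hu v hv x hx hy
        have h₁ := headLabel_spec ρ₀ (htrans i) (hμ0 i) (hμ'0 i) hu hx
        have h₂ := headLabel_spec ρ₀ (htrans i) (hμ0 i) (hμ'0 i) hv hy
        simp only [id_eq]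
        rw [← h₁, ← h₂]
      · intro u _ v _ X hX
        exact absurd hX (headLabel_ne_treeVar ρ₀ u X)
      · intro v _ j _; exact ⟨j, rfl⟩
      · intro v hv m hm
        exact ⟨m, hsi ▸ hm, rfl⟩
      · intro v _ j₁ j₂ m₁ m₂ _ _ h₁ h₂ hlt
        have e₁ : j₁ = m₁ := by simpa using h₁
        have e₂ : j₂ = m₂ := by simpa using h₂
        omega
    · rfl
    · exact ⟨fun w hw => absurd List.nil_prefix hw,
        fun w _ hw => absurd List.nil_prefix hw⟩
    · intro u hu u' hu' x hx hy
      have hux : u = x := by simpa [body] using hx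
      have h₁ := headLabel_spec ρ₀ (htrans i) (hμ0 i) (hμ'0 i) hu' (hux ▸ hy)
      simpa [hux] using h₁
    · intro u _ u' _ X hX
      exact absurd hX (by simp [body])
end
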